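/- arXiv:2510.04767 — 7 statements merged into one kernel-verified Lean document; each statement's English description precedes it below -/
import Mathlib

section
/- Let Y be partitioned into disjoint sets S_1,...,S_T and consider a model that generates S_i given X and S_{<i} via a product of per-token conditionals Q(y_j|X,S_{<i}). Then the minimum achievable KL divergence D_KL(P_data(Y|X) || Q(Y|X)) over such models is bounded below by Σ_{i=1}^T E_{S_{<i}~P_data}[C(S_i|X,S_{<i})], where C denotes conditional total correlation. -/
open Finset Filter

/-- Shannon entropy (base 2) of a distribution on a finite type. -/
noncomputable def H2 {β : Type*} [Fintype β] (p : β → ℝ) : ℝ :=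
  -∑ b, p b * Real.logb 2 (p b)

/-- KL divergence (base 2) between two distributions on a finite type. -/
noncomputable def KL2 {β : Type*} [Fintype β] (p q : β → ℝ) : ℝ :=
  ∑ b, p b * Real.logb 2 (p b / q b)

/-- `p` is a probability mass function on a finite type. -/
def IsPMF {β : Type*} [Fintype β] (p : β → ℝ) : Prop :=
  (∀ b, 0 ≤ p b) ∧ ∑ b, p b = 1

/-- Entropy of the random variable `f` on the finite probability space `(Ω, p)`. -/
noncomputable def entOf {Ω γ : Type*} [Fintype Ω] [Fintype γ] [DecidableEq γ]
    (p : Ω → ℝ) (f : Ω → γ) : ℝ :=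
  H2 (fun g => ∑ ω, if f ω = g then p ω else 0)

/-- Conditional total correlation `C((f i)_i | g)` of the family of random variables `f`
given the random variable `g`, on the finite probability space `(Ω, p)`:
`∑ i H(f i | g) - H((f i)_i | g)`, each conditional entropy written as
`H(·, g) - H(g)`. -/
noncomputable def Cof {Ω ι β γ : Type*}
    [Fintype Ω] [Fintype ι] [DecidableEq ι] [Fintype β] [DecidableEq β]
    [Fintype γ] [DecidableEq γ]
    (p : Ω → ℝ) (f : ι → Ω → β) (g : Ω → γ) : ℝ :=
  (∑ i, (entOf p (fun ω => (f i ω, g ω)) - entOf p g))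
    - (entOf p (fun ω => ((fun i => f i ω), g ω)) - entOf p g)

/-- Joint entropy of the random variable `f(Y)` together with averaging over the input `X`:
`H(f(Y) | X) + H(X)`-style quantity `∑ x pX x · H(f(Y) | X = x)`. -/
noncomputable def HJ {α β ι γ : Type*} [Fintype α] [Fintype β] [Fintype ι] [DecidableEq ι]
    [Fintype γ] [DecidableEq γ]
    (pX : α → ℝ) (P : α → (ι → β) → ℝ) (f : (ι → β) → γ) : ℝ :=
  ∑ x, pX x * entOf (P x) f

section Aux
variable {Ω γ δ : Type*} [Fintype Ω] [Fintype γ] [DecidableEq γ] [Fintype δ] [DecidableEq δ]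

/-- pushforward distribution -/
noncomputable def push (p : Ω → ℝ) (f : Ω → γ) : γ → ℝ :=
  fun g => ∑ ω, if f ω = g then p ω else 0

lemma sum_push (p : Ω → ℝ) (f : Ω → γ) (L : γ → ℝ) :
    ∑ g, push p f g * L g = ∑ ω, p ω * L (f ω) := by
  simp only [push, sum_mul, ite_mul, zero_mul]
  rw [Finset.sum_comm]
  exact Finset.sum_congr rfl fun ω _ => by rw [Finset.sum_ite_eq]; simp

omit [Fintype γ] in
lemma push_nonneg (p : Ω → ℝ) (hp : ∀ ω, 0 ≤ p ω) (f : Ω → γ) (g : γ) : 0 ≤ push p f g :=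
  Finset.sum_nonneg fun ω _ => by by_cases h : f ω = g <;> simp [h, hp ω]

lemma push_sum (p : Ω → ℝ) (f : Ω → γ) : ∑ g, push p f g = ∑ ω, p ω := by
  simpa using sum_push p f (fun _ => 1)

lemma le_push (p : Ω → ℝ) (hp : ∀ ω, 0 ≤ p ω) (f : Ω → γ) (ω : Ω) :
    p ω ≤ push p f (f ω) := by
  have : p ω = if f ω = f ω then p ω else 0 := by simp
  rw [this]
  exact Finset.single_le_sum (f := fun ω' => if f ω' = f ω then p ω' else 0)
    (fun ω' _ => by by_cases h : f ω' = f ω <;> simp [h, hp ω']) (mem_univ ω)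

lemma entOf_eq_sum (p : Ω → ℝ) (f : Ω → γ) :
    entOf p f = -∑ ω, p ω * Real.logb 2 (push p f (f ω)) := by
  have h1 : entOf p f = -∑ g, push p f g * Real.logb 2 (push p f g) := rfl
  rw [h1, sum_push p f (fun g => Real.logb 2 (push p f g))]

lemma push_id [DecidableEq Ω] (p : Ω → ℝ) : push p (fun ω => ω) = p := by
  funext g
  simp [push, Finset.sum_ite_eq']

lemma entOf_id [DecidableEq Ω] (p : Ω → ℝ) :
    entOf p (fun ω => ω) = -∑ ω, p ω * Real.logb 2 (p ω) := by
  rw [entOf_eq_sum, push_id]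

lemma entOf_comp_equiv (p : Ω → ℝ) (f : Ω → γ) (e : γ ≃ δ) :
    entOf p (fun ω => e (f ω)) = entOf p f := by
  have h1 : entOf p (fun ω => e (f ω))
      = -∑ d, push p (fun ω => e (f ω)) d * Real.logb 2 (push p (fun ω => e (f ω)) d) := rfl
  have h2 : entOf p f = -∑ g, push p f g * Real.logb 2 (push p f g) := rfl
  rw [h1, h2]
  congr 1
  rw [← Equiv.sum_comp e
    (fun d => push p (fun ω => e (f ω)) d * Real.logb 2 (push p (fun ω => e (f ω)) d))]
  refine Finset.sum_congr rfl fun g _ => ?_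
  have h3 : push p (fun ω => e (f ω)) (e g) = push p f g := by
    refine Finset.sum_congr rfl fun ω _ => ?_
    exact if_congr (by simp) rfl rfl
  rw [h3]

lemma entOf_const [Nonempty Ω] (p : Ω → ℝ) (hp1 : ∑ ω, p ω = 1) (f : Ω → γ)
    (hf : ∀ ω ω', f ω = f ω') : entOf p f = 0 := by
  obtain ⟨ω₀⟩ := ‹Nonempty Ω›
  rw [entOf_eq_sum]
  have : ∀ ω, push p f (f ω) = 1 := by
    intro ω
    rw [push]
    rw [← hp1]
    exact Finset.sum_congr rfl fun ω' _ => by simp [hf ω' ω]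
  simp [this]

/-- Gibbs' inequality. -/
lemma gibbs (p q : γ → ℝ) (hp0 : ∀ b, 0 ≤ p b) (hq0 : ∀ b, 0 ≤ q b)
    (hp1 : ∑ b, p b = 1) (hq1 : ∑ b, q b ≤ 1) (hqp : ∀ b, q b = 0 → p b = 0) :
    0 ≤ ∑ b, p b * Real.logb 2 (p b / q b) := by
  have hlog2 : (0:ℝ) < Real.log 2 := Real.log_pos (by norm_num)
  have key : ∀ b, (p b - q b) / Real.log 2 ≤ p b * Real.logb 2 (p b / q b) := by
    intro b
    rcases eq_or_lt_of_le (hp0 b) with h | h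
    · have hq : 0 - q b ≤ 0 := by simp [hq0 b]
      rw [← h]
      simp only [zero_mul]
      exact div_nonpos_of_nonpos_of_nonneg hq hlog2.le
    · have hq : 0 < q b := by
        rcases eq_or_lt_of_le (hq0 b) with h' | h'
        · exact absurd (hqp b h'.symm) (by linarith)
        · exact h'
      have hlb : Real.log (q b / p b) ≤ q b / p b - 1 :=
        Real.log_le_sub_one_of_pos (by positivity)
      have : p b - q b ≤ p b * Real.log (p b / q b) := by
        have h2 : p b * Real.log (q b / p b) ≤ p b * (q b / p b - 1) :=
          mul_le_mul_of_nonneg_left hlb h.le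
        rw [Real.log_div hq.ne' h.ne', mul_sub] at h2
        rw [Real.log_div h.ne' hq.ne', mul_sub]
        have h3 : p b * (q b / p b - 1) = q b - p b := by field_simp
        nlinarith
      rw [Real.logb, ← mul_div_assoc]
      exact (div_le_div_iff_of_pos_right hlog2).mpr this
  have hsum : ∑ b, (p b - q b) / Real.log 2 ≤ ∑ b, p b * Real.logb 2 (p b / q b) :=
    Finset.sum_le_sum fun b _ => key b
  rw [← Finset.sum_div, Finset.sum_sub_distrib, hp1] at hsum
  have : 0 ≤ (1 - ∑ b, q b) / Real.log 2 :=
    div_nonneg (by linarith) hlog2.le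
  linarith

lemma push_snd (p : Ω → ℝ) (u : Ω → γ) (r : Ω → δ) (z : δ) :
    push p r z = ∑ b, push p (fun ω => (u ω, r ω)) (b, z) := by
  unfold push
  rw [Finset.sum_comm]
  refine Finset.sum_congr rfl fun ω _ => ?_
  have : ∀ b : γ, (if (u ω, r ω) = (b, z) then p ω else 0)
      = if u ω = b then (if r ω = z then p ω else 0) else 0 := by
    intro b
    by_cases h1 : u ω = b <;> by_cases h2 : r ω = z <;> simp [Prod.ext_iff, h1, h2]
  simp only [this, Finset.sum_ite_eq]
  simp

/-- Core lemma: conditional cross-entropy at least conditional entropy. -/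
lemma core (p : Ω → ℝ) (hp0 : ∀ ω, 0 ≤ p ω) (hp1 : ∑ ω, p ω = 1)
    (u : Ω → γ) (r : Ω → δ) (q : δ → γ → ℝ)
    (hqpos : ∀ z b, 0 < q z b) (hq1 : ∀ z, ∑ b, q z b = 1) :
    entOf p (fun ω => (u ω, r ω)) - entOf p r ≤ -∑ ω, p ω * Real.logb 2 (q (r ω) (u ω)) := by
  set φ : Ω → γ × δ := fun ω => (u ω, r ω) with hφ
  set A : γ × δ → ℝ := push p φ with hA
  set B : δ → ℝ := push p r with hB
  have hA0 : ∀ g, 0 ≤ A g := push_nonneg p hp0 φ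
  have hA1 : ∑ g, A g = 1 := by rw [hA, push_sum, hp1]
  have hBm : ∀ z, B z = ∑ b, A (b, z) := fun z => push_snd p u r z
  have hB0 : ∀ z, 0 ≤ B z := push_nonneg p hp0 r
  set qq : γ × δ → ℝ := fun g => B g.2 * q g.2 g.1 with hqq
  have hqq0 : ∀ g, 0 ≤ qq g := fun g => mul_nonneg (hB0 g.2) (hqpos g.2 g.1).le
  have hqq1 : ∑ g, qq g = 1 := by
    rw [Fintype.sum_prod_type_right]
    have : ∀ z, ∑ b, qq (b, z) = B z := by
      intro z
      rw [show ∑ b, qq (b, z) = ∑ b, B z * q z b from rfl, ← Finset.mul_sum, hq1 z, mul_one]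
    simp only [this]
    rw [hB, push_sum, hp1]
  have hqqA : ∀ g, qq g = 0 → A g = 0 := by
    intro ⟨b, z⟩ h
    have hBz : B z = 0 := by
      by_contra hne
      have := mul_ne_zero hne (hqpos z b).ne'
      exact this h
    have hle : A (b, z) ≤ B z := by
      rw [hBm z]
      exact Finset.single_le_sum (f := fun b => A (b, z)) (fun b _ => hA0 _) (mem_univ b)
    exact le_antisymm (hBz ▸ hle) (hA0 _)
  have hGibbs : 0 ≤ ∑ g, A g * Real.logb 2 (A g / qq g) :=
    gibbs A qq hA0 hqq0 hA1 hqq1.le hqqA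
  rw [sum_push p φ (fun g => Real.logb 2 (A g / qq g))] at hGibbs
  have hterm : ∀ ω, p ω * Real.logb 2 (A (φ ω) / qq (φ ω))
      = p ω * Real.logb 2 (A (φ ω)) - p ω * Real.logb 2 (B (r ω))
        - p ω * Real.logb 2 (q (r ω) (u ω)) := by
    intro ω
    rcases eq_or_lt_of_le (hp0 ω) with h | h
    · simp [← h]
    · have hAp : 0 < A (φ ω) := lt_of_lt_of_le h (le_push p hp0 φ ω)
      have hBp : 0 < B (r ω) := lt_of_lt_of_le h (le_push p hp0 r ω)
      have hqp : 0 < q (r ω) (u ω) := hqpos _ _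
      rw [show qq (φ ω) = B (r ω) * q (r ω) (u ω) from rfl]
      rw [Real.logb_div hAp.ne' (by positivity), Real.logb_mul hBp.ne' hqp.ne']
      ring
  rw [Finset.sum_congr rfl (fun ω _ => hterm ω)] at hGibbs
  have e1 : entOf p φ = -∑ ω, p ω * Real.logb 2 (A (φ ω)) := entOf_eq_sum p φ
  have e2 : entOf p r = -∑ ω, p ω * Real.logb 2 (B (r ω)) := entOf_eq_sum p r
  rw [hφ] at e1
  rw [e1, e2]
  have hsplit : ∑ ω, (p ω * Real.logb 2 (A (φ ω)) - p ω * Real.logb 2 (B (r ω))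
        - p ω * Real.logb 2 (q (r ω) (u ω)))
      = ∑ ω, p ω * Real.logb 2 (A (φ ω)) - ∑ ω, p ω * Real.logb 2 (B (r ω))
        - ∑ ω, p ω * Real.logb 2 (q (r ω) (u ω)) := by
    rw [Finset.sum_sub_distrib, Finset.sum_sub_distrib]
  rw [hsplit] at hGibbs
  linarith
end Aux

/-- Let `Y` (tokens indexed by `ι`) be partitioned into disjoint sets
`S_1,…,S_T` (via the block assignment `blk`), and consider a model that generates `S_i`
given `X` and `S_{<i}` via a product of per-token conditionals `Q(y_j | X, S_{<i})`.
Then the KL divergence `D_KL(P_data(Y|X) ‖ Q(Y|X))` of any such model is bounded below by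
`∑ i E_{S_{<i}}[C(S_i | X, S_{<i})]`, each expected conditional total correlation written as
`∑_{j ∈ S_i} (H(y_j, S_{<i}|X) - H(S_{<i}|X)) - (H(S_{≤i}|X) - H(S_{<i}|X))`. -/
theorem stmt_1 {α β ι : Type*} [Fintype α] [Fintype β] [DecidableEq β]
    [Fintype ι] [DecidableEq ι] {T : ℕ}
    (blk : ι → Fin T) (hblk : Function.Surjective blk)
    (pX : α → ℝ) (P : α → (ι → β) → ℝ)
    (hpX : IsPMF pX) (hP : ∀ x, IsPMF (P x))
    (Q : ι → α → (ι → β) → β → ℝ)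
    (hQpmf : ∀ j x y, IsPMF (Q j x y))
    (hQpos : ∀ j x y b, 0 < Q j x y b)
    (hQdep : ∀ j x y y', (∀ k, blk k < blk j → y k = y' k) → Q j x y = Q j x y') :
    ∑ x, pX x * KL2 (P x) (fun y => ∏ j, Q j x y (y j))
      ≥ ∑ i : Fin T,
          ((∑ j ∈ univ.filter fun j => blk j = i,
              (HJ pX P (fun y => (y j, fun k : {k // blk k < i} => y k.1))
                - HJ pX P (fun y => fun k : {k // blk k < i} => y k.1)))
            - (HJ pX P (fun y => fun k : {k // blk k ≤ i} => y k.1)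
                - HJ pX P (fun y => fun k : {k // blk k < i} => y k.1))) := by
  classical
  have hαne : Nonempty α := by
    by_contra h
    rw [not_nonempty_iff] at h
    have h1 := hpX.2
    rw [Finset.univ_eq_empty, Finset.sum_empty] at h1
    norm_num at h1
  rcases isEmpty_or_nonempty β with hβ | hβ
  · rcases isEmpty_or_nonempty ι with hι | hι
    · haveI : IsEmpty (Fin T) := ⟨fun i => by obtain ⟨j, _⟩ := hblk i; exact IsEmpty.false j⟩
      rw [Finset.univ_eq_empty (α := Fin T), Finset.sum_empty]
      have hKL0 : ∀ x, KL2 (P x) (fun y => ∏ j, Q j x y (y j)) = 0 := by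
        intro x
        unfold KL2
        have hprod : ∀ y : ι → β, (∏ j, Q j x y (y j)) = 1 := fun y => by
          rw [Finset.univ_eq_empty (α := ι), Finset.prod_empty]
        simp only [hprod, div_one]
        haveI : Unique (ι → β) :=
          ⟨⟨fun i => isEmptyElim i⟩, fun y => funext fun i => isEmptyElim i⟩
        rw [Fintype.sum_unique]
        have h1 : P x default = 1 := by
          have h2 := (hP x).2; rwa [Fintype.sum_unique] at h2
        rw [h1]; simp
      simp only [hKL0, mul_zero, Finset.sum_const_zero]
      exact le_refl 0
    · exfalso
      obtain ⟨x⟩ := hαne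
      haveI : IsEmpty (ι → β) := ⟨fun y => IsEmpty.false (y (Classical.arbitrary ι))⟩
      have h1 := (hP x).2
      rw [Finset.univ_eq_empty, Finset.sum_empty] at h1
      norm_num at h1
  · have : Inhabited β := Classical.inhabited_of_nonempty hβ
    rw [ge_iff_le]
    -- Step R1: combine the fiberwise sum
    have hR1 : ∑ i : Fin T, ∑ j ∈ univ.filter (fun j => blk j = i),
          (HJ pX P (fun y => (y j, fun k : {k // blk k < i} => y k.1))
            - HJ pX P (fun y => fun k : {k // blk k < i} => y k.1))
        = ∑ j, (HJ pX P (fun y => (y j, fun k : {k // blk k < blk j} => y k.1))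
            - HJ pX P (fun y => fun k : {k // blk k < blk j} => y k.1)) := by
      rw [← Finset.sum_fiberwise univ blk
        (fun j => HJ pX P (fun y => (y j, fun k : {k // blk k < blk j} => y k.1))
            - HJ pX P (fun y => fun k : {k // blk k < blk j} => y k.1))]
      refine Finset.sum_congr rfl fun i _ => Finset.sum_congr rfl fun j hj => ?_
      rw [Finset.mem_filter] at hj
      rw [hj.2]
    -- gN telescoping
    set gN : ℕ → ℝ :=
      fun n => HJ pX P (fun y => fun k : {k // (blk k : ℕ) < n} => y k.1) with hgN
    have hres : ∀ i : Fin T,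
        HJ pX P (fun y => fun k : {k // blk k < i} => y k.1) = gN i.val := fun i => rfl
    have hle : ∀ i : Fin T,
        HJ pX P (fun y => fun k : {k // blk k ≤ i} => y k.1) = gN (i.val + 1) := by
      intro i
      rw [hgN]
      unfold HJ
      refine Finset.sum_congr rfl fun x _ => ?_
      congr 1
      exact (entOf_comp_equiv (P x) (fun y : ι → β => fun k : {k // blk k ≤ i} => y k.1)
        (Equiv.arrowCongr (Equiv.subtypeEquivRight (fun k => by
          rw [Fin.le_def, Nat.lt_succ_iff])) (Equiv.refl β))).symm
    have hg0 : gN 0 = 0 := by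
      rw [hgN]
      unfold HJ
      have h0 : ∀ x : α, entOf (P x) (fun y : ι → β => fun k : {k // (blk k : ℕ) < 0} => y k.1) = 0 := by
        intro x
        refine entOf_const (P x) (hP x).2 _ fun y y' => funext fun k => absurd k.2 (Nat.not_lt_zero _)
      simp [h0]
    have hgT : gN T = ∑ x, pX x * entOf (P x) (fun y : ι → β => y) := by
      rw [hgN]
      unfold HJ
      refine Finset.sum_congr rfl fun x _ => ?_
      congr 1
      exact (entOf_comp_equiv (P x) (fun y : ι → β => fun k : {k // (blk k : ℕ) < T} => y k.1)
        (Equiv.arrowCongr (Equiv.subtypeUnivEquiv (fun k => (blk k).isLt)) (Equiv.refl β))).symm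
    have htel : ∑ i : Fin T, (gN (i.val + 1) - gN i.val) = gN T - gN 0 := by
      rw [Fin.sum_univ_eq_sum_range (fun n => gN (n + 1) - gN n) T]
      exact Finset.sum_range_sub gN T
    -- per-x inequality
    have main : ∀ x, ∑ j, (entOf (P x) (fun y => (y j, fun k : {k // blk k < blk j} => y k.1))
          - entOf (P x) (fun y : ι → β => fun k : {k // blk k < blk j} => y k.1))
          - entOf (P x) (fun y : ι → β => y)
        ≤ KL2 (P x) (fun y => ∏ j, Q j x y (y j)) := by
      intro x
      have hKL : KL2 (P x) (fun y => ∏ j, Q j x y (y j))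
          = (∑ y, P x y * Real.logb 2 (P x y))
            - ∑ j, ∑ y, P x y * Real.logb 2 (Q j x y (y j)) := by
        unfold KL2
        have hterm : ∀ y, P x y * Real.logb 2 (P x y / ∏ j, Q j x y (y j))
            = P x y * Real.logb 2 (P x y) - P x y * ∑ j, Real.logb 2 (Q j x y (y j)) := by
          intro y
          rcases eq_or_lt_of_le ((hP x).1 y) with h | h
          · simp [← h]
          · have hq : ∀ j ∈ (univ : Finset ι), Q j x y (y j) ≠ 0 :=
              fun j _ => (hQpos j x y (y j)).ne'
            rw [Real.logb_div h.ne' (Finset.prod_ne_zero_iff.mpr hq),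
              Real.logb_prod univ _ hq]
            ring
        rw [Finset.sum_congr rfl fun y _ => hterm y, Finset.sum_sub_distrib]
        congr 1
        simp_rw [Finset.mul_sum]
        exact Finset.sum_comm
      have hj : ∀ j : ι, entOf (P x) (fun y => (y j, fun k : {k // blk k < blk j} => y k.1))
          - entOf (P x) (fun y : ι → β => fun k : {k // blk k < blk j} => y k.1)
          ≤ -∑ y, P x y * Real.logb 2 (Q j x y (y j)) := by
        intro j
        set r : (ι → β) → ({k // blk k < blk j} → β) := fun y k => y k.1 with hr
        set q : ({k // blk k < blk j} → β) → β → ℝ :=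
          fun z b => Q j x (fun k => if h : blk k < blk j then z ⟨k, h⟩ else default) b with hq
        have hrw : ∀ y, Q j x y (y j) = q (r y) (y j) := by
          intro y
          have h1 := hQdep j x y (fun k => if h : blk k < blk j then (r y) ⟨k, h⟩ else default)
            (fun k hk => by simp [hr, dif_pos hk])
          rw [h1]
        have hcore := core (P x) (hP x).1 (hP x).2 (fun y => y j) r q
          (fun z b => hQpos _ _ _ _) (fun z => (hQpmf j x _).2)
        calc entOf (P x) (fun y => (y j, fun k : {k // blk k < blk j} => y k.1))
              - entOf (P x) (fun y : ι → β => fun k : {k // blk k < blk j} => y k.1)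
            ≤ -∑ y, P x y * Real.logb 2 (q (r y) (y j)) := hcore
          _ = -∑ y, P x y * Real.logb 2 (Q j x y (y j)) := by
              congr 1
              exact Finset.sum_congr rfl fun y _ => by rw [hrw y]
      have hsum := Finset.sum_le_sum (fun j (_ : j ∈ univ) => hj j)
      rw [hKL, entOf_id]
      rw [Finset.sum_neg_distrib] at hsum
      linarith
    -- assemble
    calc ∑ i : Fin T,
          ((∑ j ∈ univ.filter fun j => blk j = i,
              (HJ pX P (fun y => (y j, fun k : {k // blk k < i} => y k.1))
                - HJ pX P (fun y => fun k : {k // blk k < i} => y k.1)))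
            - (HJ pX P (fun y => fun k : {k // blk k ≤ i} => y k.1)
                - HJ pX P (fun y => fun k : {k // blk k < i} => y k.1)))
        = ∑ j, (HJ pX P (fun y => (y j, fun k : {k // blk k < blk j} => y k.1))
            - HJ pX P (fun y => fun k : {k // blk k < blk j} => y k.1))
          - (gN T - gN 0) := by
          rw [Finset.sum_sub_distrib, hR1]
          congr 1
          rw [← htel]
          exact Finset.sum_congr rfl fun i _ => by rw [hle i, hres i]
      _ = ∑ x, pX x * (∑ j, (entOf (P x) (fun y => (y j, fun k : {k // blk k < blk j} => y k.1))
            - entOf (P x) (fun y : ι → β => fun k : {k // blk k < blk j} => y k.1))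
            - entOf (P x) (fun y : ι → β => y)) := by
          rw [hg0, sub_zero, hgT]
          unfold HJ
          simp only [← Finset.sum_sub_distrib]
          rw [Finset.sum_comm]
          rw [← Finset.sum_sub_distrib]
          refine Finset.sum_congr rfl fun x _ => ?_
          rw [mul_sub, Finset.mul_sum]
          simp_rw [mul_sub]
      _ ≤ ∑ x, pX x * KL2 (P x) (fun y => ∏ j, Q j x y (y j)) :=
          Finset.sum_le_sum fun x _ => mul_le_mul_of_nonneg_left (main x) (hpX.1 x)
end

section
/- Let L*_T denote the minimum over all T-step partitions {S_i} of Y of the error bound L_T({S_i}) = Σ_i E_{S_{<i}}[C(S_i|X,S_{<i})]. Then L*_T is monotonically decreasing in T: L*_T ≥ L*_{T+1} for all 1 ≤ T < |Y|. -/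
/-!
Take an admissible `T`-step partition. Since `T < |Y|`, some block `S_k` has two elements; move
one of them, `y`, into a new singleton block inserted right after `S_k`. Earlier blocks are
untouched, later blocks condition on the same variables as before, and the new singleton block has
total correlation `0`. The shrunk block does not gain correlation: with `S' = S_k \ {y}` and `Z` the
conditioning variables, `C(S' | Z) ≤ C(S_k | Z)` reduces to the submodularity
`H(Z) + H(y, S', Z) ≤ H(y, Z) + H(S', Z)` of entropy, which is Gibbs' inequality.
-/

open Finset Filter

/-- The lower bound `L_T({S_i}) = ∑ i E_{S_{<i}}[C(S_i | X, S_{<i})]` associated with the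
ordered `T`-step partition of the variables `(y j)_{j : ι}` given by the block assignment
`blk : ι → Fin T`, conditioning at step `i` on the input `X` and the earlier blocks. -/
noncomputable def LTbound {Ω ξ β ι : Type*} [Fintype Ω] [Fintype ξ] [DecidableEq ξ]
    [Fintype β] [DecidableEq β] [Fintype ι] [DecidableEq ι]
    (p : Ω → ℝ) (X : Ω → ξ) (y : ι → Ω → β) (T : ℕ) (blk : ι → Fin T) : ℝ :=
  ∑ i : Fin T, Cof p (fun j : {j // blk j = i} => y j.1)
      (fun ω => (X ω, fun j : {j // blk j < i} => y j.1 ω))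

open Function

section Entropy

variable {Ω γ δ : Type*} [Fintype Ω] [DecidableEq γ] [DecidableEq δ] (p : Ω → ℝ)

noncomputable def distOf (f : Ω → γ) (c : γ) : ℝ :=
  ∑ ω, if f ω = c then p ω else 0

variable {p}

lemma distOf_nonneg (hp : ∀ ω, 0 ≤ p ω) (f : Ω → γ) (c : γ) : 0 ≤ distOf p f c :=
  Finset.sum_nonneg fun ω _ => by split_ifs <;> simp [hp ω]

lemma le_distOf_apply (hp : ∀ ω, 0 ≤ p ω) (f : Ω → γ) (ω : Ω) : p ω ≤ distOf p f (f ω) := by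
  simpa [distOf] using Finset.single_le_sum (f := fun ω' => if f ω' = f ω then p ω' else 0)
    (fun ω' _ => by split_ifs <;> simp [hp ω']) (Finset.mem_univ ω)

lemma distOf_le_distOf_comp (hp : ∀ ω, 0 ≤ p ω) (f : Ω → γ) (π : γ → δ) (c : γ) :
    distOf p f c ≤ distOf p (fun ω => π (f ω)) (π c) :=
  Finset.sum_le_sum fun ω _ => by split_ifs <;> simp_all

lemma distOf_comp_of_injective (f : Ω → γ) {θ : γ → δ} (hθ : Injective θ) (c : γ) :
    distOf p (fun ω => θ (f ω)) (θ c) = distOf p f c := by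
  simp only [distOf, hθ.eq_iff]

lemma sum_distOf_mul [Fintype γ] (f : Ω → γ) (φ : γ → ℝ) :
    ∑ c, distOf p f c * φ c = ∑ ω, p ω * φ (f ω) := by
  simp only [distOf, Finset.sum_mul, ite_mul, zero_mul]
  rw [Finset.sum_comm]
  simp

lemma sum_distOf [Fintype γ] (f : Ω → γ) : ∑ c, distOf p f c = ∑ ω, p ω := by
  simpa using sum_distOf_mul (p := p) f 1

lemma sum_distOf_prod_left [Fintype γ] (r : Ω → γ) (s : Ω → δ) (d : δ) :
    ∑ c, distOf p (fun ω => (r ω, s ω)) (c, d) = distOf p s d := by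
  simp only [distOf, Prod.mk.injEq, ite_and]
  rw [Finset.sum_comm]
  simp

lemma entOf_eq_neg_sum [Fintype γ] (f : Ω → γ) :
    entOf p f = -∑ ω, p ω * Real.logb 2 (distOf p f (f ω)) := by
  rw [← sum_distOf_mul f (fun c => Real.logb 2 (distOf p f c))]
  rfl

lemma entOf_comp_of_injective [Fintype γ] [Fintype δ] (f : Ω → γ) {θ : γ → δ} (hθ : Injective θ) :
    entOf p (fun ω => θ (f ω)) = entOf p f := by
  simp only [entOf_eq_neg_sum, distOf_comp_of_injective f hθ]

end Entropy

lemma KL2_nonneg {W : Type*} [Fintype W] {P Q : W → ℝ} (hP : ∀ w, 0 ≤ P w)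
    (hQ : ∀ w, 0 ≤ Q w) (hPQ : ∀ w, P w ≠ 0 → Q w ≠ 0) (hsum : ∑ w, Q w ≤ ∑ w, P w) :
    0 ≤ KL2 P Q := by
  have hlog : ∀ w, P w * Real.log (Q w / P w) ≤ Q w - P w := by
    intro w
    rcases (hP w).eq_or_lt with h | h
    · simp [← h, hQ w]
    · have hq : 0 < Q w := (hQ w).lt_of_ne (hPQ w h.ne').symm
      calc P w * Real.log (Q w / P w) ≤ P w * (Q w / P w - 1) :=
            mul_le_mul_of_nonneg_left (Real.log_le_sub_one_of_pos (div_pos hq h)) h.le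
        _ = Q w - P w := by field_simp
  have hflip : ∀ w, P w * Real.logb 2 (P w / Q w) = -(P w * Real.log (Q w / P w)) / Real.log 2 := by
    intro w
    rw [Real.logb, ← inv_div (Q w), Real.log_inv]
    ring
  have := Finset.sum_le_sum fun w (_ : w ∈ Finset.univ) => hlog w
  rw [Finset.sum_sub_distrib] at this
  rw [KL2, Finset.sum_congr rfl fun w _ => hflip w, ← Finset.sum_div, Finset.sum_neg_distrib]
  exact div_nonneg (by linarith) (Real.log_nonneg one_le_two)

variable {Ω U A Z : Type*} [Fintype Ω] [Fintype U] [DecidableEq U] [Fintype A] [DecidableEq A]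
  [Fintype Z] [DecidableEq Z] {p : Ω → ℝ} in
lemma entOf_submodular (hp : ∀ ω, 0 ≤ p ω) (u : Ω → U) (a : Ω → A) (z : Ω → Z) :
    entOf p z + entOf p (fun ω => (u ω, a ω, z ω)) ≤
      entOf p (fun ω => (u ω, z ω)) + entOf p (fun ω => (a ω, z ω)) := by
  set t : Ω → U × A × Z := fun ω => (u ω, a ω, z ω)
  set P := distOf p t
  set Puz := distOf p (fun ω => (u ω, z ω))
  set Paz := distOf p (fun ω => (a ω, z ω))
  set Pz := distOf p z
  -- `Q` makes `u` and `a` conditionally independent given `z`; `x / 0 = 0` handles `Pz = 0`.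
  set Q : U × A × Z → ℝ := fun w => Puz (w.1, w.2.2) * Paz w.2 / Pz w.2.2
  have hQ : ∀ w, 0 ≤ Q w := fun w => by
    have := distOf_nonneg hp (fun ω => (u ω, z ω)) (w.1, w.2.2)
    have := distOf_nonneg hp (fun ω => (a ω, z ω)) w.2
    have := distOf_nonneg hp z w.2.2
    positivity
  have hPQ : ∀ w, P w ≠ 0 → Q w ≠ 0 := by
    intro w hw
    have hPw : 0 < P w := (distOf_nonneg hp t w).lt_of_ne' hw
    have huz := distOf_le_distOf_comp hp t (fun w => (w.1, w.2.2)) w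
    have haz := distOf_le_distOf_comp hp t Prod.snd w
    have hz := distOf_le_distOf_comp hp t (fun w => w.2.2) w
    exact (div_pos (mul_pos (hPw.trans_le huz) (hPw.trans_le haz)) (hPw.trans_le hz)).ne'
  have hsum : ∑ w, Q w = ∑ w, P w := by
    rw [sum_distOf, ← sum_distOf z, Fintype.sum_prod_type_right, Fintype.sum_prod_type_right]
    refine Finset.sum_congr rfl fun z0 _ => ?_
    calc ∑ a0, ∑ u0, Q (u0, a0, z0)
        = (∑ u0, Puz (u0, z0)) * (∑ a0, Paz (a0, z0)) / Pz z0 := by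
          simp only [Q, Finset.sum_div, Finset.sum_mul_sum]
          exact Finset.sum_comm
      _ = Pz z0 := by rw [sum_distOf_prod_left, sum_distOf_prod_left, mul_self_div_self]
  have hpoint : ∀ ω, p ω * Real.logb 2 (P (t ω) / Q (t ω)) =
      p ω * Real.logb 2 (P (t ω)) + p ω * Real.logb 2 (Pz (z ω))
        - p ω * Real.logb 2 (Puz (u ω, z ω)) - p ω * Real.logb 2 (Paz (a ω, z ω)) := by
    intro ω
    rcases (hp ω).eq_or_lt with h | h
    · simp [← h]
    have ht := h.trans_le (le_distOf_apply hp t ω)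
    have huz := h.trans_le (le_distOf_apply hp (fun ω => (u ω, z ω)) ω)
    have haz := h.trans_le (le_distOf_apply hp (fun ω => (a ω, z ω)) ω)
    have hz := h.trans_le (le_distOf_apply hp z ω)
    simp only [Q]
    rw [div_div_eq_mul_div, Real.logb_div (by positivity) (by positivity),
      Real.logb_mul ht.ne' hz.ne', Real.logb_mul huz.ne' haz.ne']
    ring
  have hKL : KL2 P Q = entOf p (fun ω => (u ω, z ω)) + entOf p (fun ω => (a ω, z ω))
      - entOf p z - entOf p t := by
    rw [KL2, sum_distOf_mul t (fun w => Real.logb 2 (P w / Q w))]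
    simp only [entOf_eq_neg_sum, hpoint, Finset.sum_add_distrib, Finset.sum_sub_distrib]
    ring
  linarith [KL2_nonneg (distOf_nonneg hp t) hQ hPQ hsum.le]

section CondTotalCorrelation

variable {Ω ι β γ : Type*} [Fintype Ω] [Fintype ι] [DecidableEq ι] [Fintype β] [DecidableEq β]
  [Fintype γ] [DecidableEq γ] {p : Ω → ℝ}

lemma Cof_of_unique [Unique ι] (f : ι → Ω → β) (g : Ω → γ) : Cof p f g = 0 := by
  have hjoint :
      entOf p (fun ω => ((fun i => f i ω), g ω)) = entOf p (fun ω => (f default ω, g ω)) := by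
    rw [← entOf_comp_of_injective (fun ω => (f default ω, g ω))
      ((Equiv.funUnique ι β).symm.injective.prodMap injective_id)]
    congr! with ω i
    rw [Unique.eq_default i]
    rfl
  rw [Cof, Fintype.sum_unique, hjoint, sub_self]

lemma Cof_subtype_and_ne_le (hp : ∀ ω, 0 ≤ p ω) (y : ι → Ω → β) (S : ι → Prop) [DecidablePred S]
    {j0 : ι} (hj0 : S j0) (g : Ω → γ) :
    Cof p (fun j : {j // S j ∧ j ≠ j0} => y j.1) g ≤ Cof p (fun j : {j // S j} => y j.1) g := by
  have hsub := entOf_submodular hp (y j0) (fun ω => fun j : {j // S j ∧ j ≠ j0} => y j.1 ω) g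
  have hsplit : ∀ e : ι → ℝ, ∑ j : {j // S j}, e j = e j0 + ∑ j : {j // S j ∧ j ≠ j0}, e j := by
    intro e
    rw [← Finset.sum_subtype (Finset.univ.filter S) (by simp) e,
      ← Finset.sum_subtype ((Finset.univ.filter S).erase j0) (by simp [and_comm]) e,
      Finset.add_sum_erase _ e (by simp [hj0])]
  have hjoint : entOf p (fun ω => ((fun j : {j // S j} => y j.1 ω), g ω)) =
      entOf p (fun ω => (y j0 ω, (fun j : {j // S j ∧ j ≠ j0} => y j.1 ω), g ω)) := by
    set θ : ({j // S j} → β) × γ → β × ({j // S j ∧ j ≠ j0} → β) × γ :=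
      fun c => (c.1 ⟨j0, hj0⟩, fun j => c.1 ⟨j.1, j.2.1⟩, c.2)
    have hθ : Injective θ := by
      rintro ⟨c, x⟩ ⟨c', x'⟩ h
      simp only [θ, Prod.mk.injEq] at h
      obtain ⟨h0, hrest, rfl⟩ := h
      refine Prod.ext (funext fun j => ?_) rfl
      by_cases hj : j.1 = j0
      · obtain rfl : j = ⟨j0, hj0⟩ := Subtype.ext hj
        exact h0
      · exact congrFun hrest ⟨j.1, j.2, hj⟩
    exact (entOf_comp_of_injective _ hθ).symm
  rw [Cof, Cof, hsplit fun j => entOf p (fun ω => (y j ω, g ω)) - entOf p g, hjoint]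
  linarith

end CondTotalCorrelation

section SplitOff

variable {ι : Type*} [DecidableEq ι] {T : ℕ}

/-- Moves `j0` out of its block `k` into a new singleton block inserted right after `k`. -/
def splitOff (blk : ι → Fin T) (j0 : ι) (j : ι) : Fin (T + 1) :=
  if j = j0 then (blk j0).succ else (blk j0).succ.succAbove (blk j)

lemma splitOff_eq_succ_iff (blk : ι → Fin T) (j0 j : ι) :
    splitOff blk j0 j = (blk j0).succ ↔ j = j0 := by
  unfold splitOff
  split_ifs with h
  · simp [h]
  · simp [h, Fin.succAbove_ne]

lemma splitOff_eq_succAbove_iff (blk : ι → Fin T) (j0 j : ι) (i : Fin T) :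
    splitOff blk j0 j = (blk j0).succ.succAbove i ↔ blk j = i ∧ j ≠ j0 := by
  unfold splitOff
  split_ifs with h
  · simp [h, (Fin.succAbove_ne _ i).symm]
  · simp [h]

lemma splitOff_lt_succAbove_iff (blk : ι → Fin T) (j0 j : ι) (i : Fin T) :
    splitOff blk j0 j < (blk j0).succ.succAbove i ↔ blk j < i := by
  unfold splitOff
  split_ifs with h
  · rw [Fin.lt_succAbove_iff_le_castSucc, Fin.succ_le_castSucc_iff, h]
  · exact Fin.succAbove_lt_succAbove_iff

lemma splitOff_surjective {blk : ι → Fin T} (hblk : Surjective blk) {j0 j1 : ι}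
    (hne : j1 ≠ j0) (hj1 : blk j1 = blk j0) : Surjective (splitOff blk j0) := by
  intro i'
  induction i' using (blk j0).succ.succAboveCases with
  | x => exact ⟨j0, (splitOff_eq_succ_iff blk j0 j0).2 rfl⟩
  | p i =>
    by_cases hi : i = blk j0
    · exact ⟨j1, (splitOff_eq_succAbove_iff blk j0 j1 i).2 ⟨hj1.trans hi.symm, hne⟩⟩
    · obtain ⟨j, rfl⟩ := hblk i
      exact ⟨j, (splitOff_eq_succAbove_iff blk j0 j _).2 ⟨rfl, fun h => hi (h ▸ rfl)⟩⟩

end SplitOff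

section Blocks

variable {Ω ξ β ι : Type*} [Fintype Ω] [Fintype ξ] [DecidableEq ξ] [Fintype β] [DecidableEq β]
  [Fintype ι] [DecidableEq ι] {p : Ω → ℝ} {X : Ω → ξ} {y : ι → Ω → β}

variable (p X y) in
noncomputable def blockCof (S P : ι → Prop) [DecidablePred S] [DecidablePred P] : ℝ :=
  Cof p (fun j : {j // S j} => y j.1) (fun ω => (X ω, fun j : {j // P j} => y j.1 ω))

lemma LTbound_eq_sum_blockCof (T : ℕ) (blk : ι → Fin T) :
    LTbound p X y T blk = ∑ i, blockCof p X y (blk · = i) (blk · < i) := rfl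

lemma blockCof_congr {S S' P P' : ι → Prop} [DecidablePred S] [DecidablePred S']
    [DecidablePred P] [DecidablePred P'] (hS : ∀ j, S j ↔ S' j) (hP : ∀ j, P j ↔ P' j) :
    blockCof p X y S P = blockCof p X y S' P' := by
  obtain rfl : S = S' := funext fun j => propext (hS j)
  obtain rfl : P = P' := funext fun j => propext (hP j)
  congr!

lemma blockCof_singleton (j0 : ι) (P : ι → Prop) [DecidablePred P] :
    blockCof p X y (· = j0) P = 0 := by
  let : Fintype {j // j = j0} := Subtype.fintype _
  exact Cof_of_unique _ _

lemma blockCof_and_ne_le (hp : ∀ ω, 0 ≤ p ω) (S P : ι → Prop) [DecidablePred S]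
    [DecidablePred P] {j0 : ι} (hj0 : S j0) :
    blockCof p X y (fun j => S j ∧ j ≠ j0) P ≤ blockCof p X y S P :=
  Cof_subtype_and_ne_le hp y S hj0 _

variable {T : ℕ}

lemma LTbound_splitOff_le (hp : ∀ ω, 0 ≤ p ω) (blk : ι → Fin T) (j0 : ι) :
    LTbound p X y (T + 1) (splitOff blk j0) ≤ LTbound p X y T blk := by
  rw [LTbound_eq_sum_blockCof, LTbound_eq_sum_blockCof, Fin.sum_univ_succAbove _ (blk j0).succ,
    blockCof_congr (splitOff_eq_succ_iff blk j0) (fun _ => Iff.rfl), blockCof_singleton, zero_add]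
  refine Finset.sum_le_sum fun i _ => ?_
  rw [blockCof_congr (splitOff_eq_succAbove_iff blk j0 · i) (splitOff_lt_succAbove_iff blk j0 · i)]
  by_cases hi : i = blk j0
  · exact blockCof_and_ne_le hp _ _ hi.symm
  · exact le_of_eq <| blockCof_congr
      (fun j => and_iff_left_of_imp fun h h' => hi (by rw [← h, h'])) (fun _ => Iff.rfl)

lemma exists_surjective_LTbound_succ_le (hp : ∀ ω, 0 ≤ p ω) {blk : ι → Fin T}
    (hblk : Surjective blk) (hT : T < Fintype.card ι) :
    ∃ blk' : ι → Fin (T + 1),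
      Surjective blk' ∧ LTbound p X y (T + 1) blk' ≤ LTbound p X y T blk := by
  obtain ⟨j0, j1, hne, hj⟩ := Fintype.exists_ne_map_eq_of_card_lt blk (by simpa using hT)
  exact ⟨splitOff blk j0, splitOff_surjective hblk hne.symm hj.symm, LTbound_splitOff_le hp blk j0⟩

end Blocks

/-- Let `L*_T` denote the minimum over all `T`-step ordered partitions
(surjective block assignments `blk : ι → Fin T`) of `Y = (y j)_j` of the error bound
`L_T({S_i}) = ∑ i E_{S_{<i}}[C(S_i|X,S_{<i})]`. Then `L*_T` is monotonically decreasing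
in `T`: `L*_T ≥ L*_{T+1}` for all `1 ≤ T < |Y|`. -/
theorem stmt_3 {Ω ξ β ι : Type*} [Fintype Ω] [Fintype ξ] [DecidableEq ξ]
    [Fintype β] [DecidableEq β] [Fintype ι] [DecidableEq ι]
    (p : Ω → ℝ) (hp : IsPMF p) (X : Ω → ξ) (y : ι → Ω → β)
    (T : ℕ) (hT1 : 1 ≤ T) (hT : T < Fintype.card ι) :
    sInf {L : ℝ | ∃ blk : ι → Fin T, Function.Surjective blk ∧ L = LTbound p X y T blk}
      ≥ sInf {L : ℝ | ∃ blk : ι → Fin (T + 1),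
          Function.Surjective blk ∧ L = LTbound p X y (T + 1) blk} := by
  have : Nonempty (Fin T) := ⟨⟨0, hT1⟩⟩
  obtain ⟨e⟩ := Function.Embedding.nonempty_of_card_le (α := Fin T) (β := ι) (by simpa using hT.le)
  have hbdd : BddBelow {L : ℝ | ∃ blk : ι → Fin (T + 1),
      Function.Surjective blk ∧ L = LTbound p X y (T + 1) blk} := by
    refine (Set.finite_range (LTbound p X y (T + 1))).bddBelow.mono ?_
    rintro _ ⟨blk, -, rfl⟩
    exact Set.mem_range_self blk
  refine le_csInf ⟨_, invFun e, invFun_surjective e.injective, rfl⟩ ?_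
  rintro _ ⟨blk, hblk, rfl⟩
  obtain ⟨blk', hblk', hle⟩ := exists_surjective_LTbound_succ_le (X := X) (y := y) hp.1 hblk hT
  exact (csInf_le hbdd ⟨blk', hblk', rfl⟩).trans hle
end

section
/- For the Replace Random task on lists of length n, where the output equals the input except that one uniformly random position is replaced by a fixed new symbol, the conditional total correlation is C(Y|X) = (n-1)[log₂(n) - log₂(n-1)]. -/
open Finset Filter

/-!
Since `F` is fresh, the output determines the replaced index `k`, so its entropy is that of the
uniform index, `log₂ n`; each output coordinate is an injective image of the indicator of
`k = i`, a Bernoulli(1/n) variable. Conditioning on the fixed input is conditioning on a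
constant, which changes no entropy.
-/

section Entropy

variable {Ω β γ : Type*} [Fintype Ω] [Fintype β] [DecidableEq β] [Fintype γ] [DecidableEq γ]

lemma entOf_comp_of_injective_s5 (p : Ω → ℝ) (f : Ω → β) {e : β → γ}
    (he : Function.Injective e) : entOf p (e ∘ f) = entOf p f := by
  unfold entOf H2
  congr 1
  symm
  refine Fintype.sum_of_injective e he _ _ ?_ ?_
  · intro c hc
    have hc' : ∀ ω, e (f ω) ≠ c := fun ω h => hc ⟨f ω, h⟩
    simp [hc']
  · intro b
    simp [he.eq_iff]

lemma entOf_const_s5 (p : Ω → ℝ) (hp : ∑ ω, p ω = 1) (c : γ) : entOf p (fun _ => c) = 0 := by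
  simp [entOf, H2, hp]

lemma H2_bool (q : Bool → ℝ) :
    H2 q = -(q true * Real.logb 2 (q true) + q false * Real.logb 2 (q false)) := by
  simp [H2, add_comm]

end Entropy

section Uniform

variable {n : ℕ}

lemma entOf_uniform_of_injective {γ : Type*} [Fintype γ] [DecidableEq γ] {f : Fin n → γ}
    (hf : Function.Injective f) : entOf (fun _ : Fin n => (n : ℝ)⁻¹) f = Real.logb 2 n := by
  rw [← Function.comp_id f, entOf_comp_of_injective_s5 _ _ hf]
  simp only [entOf, H2, id, Finset.sum_ite_eq', Finset.mem_univ, if_true, Finset.sum_const,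
    Finset.card_univ, Fintype.card_fin, nsmul_eq_mul, Real.logb_inv]
  rcases eq_or_ne (n : ℝ) 0 with hn | hn
  · simp [hn]
  · field_simp

lemma entOf_uniform_decide_eq (i : Fin n) :
    entOf (fun _ : Fin n => (n : ℝ)⁻¹) (fun ω => decide (i = ω))
      = -((n : ℝ)⁻¹ * Real.logb 2 (n : ℝ)⁻¹
          + ((n : ℝ) - 1) / n * Real.logb 2 (((n : ℝ) - 1) / n)) := by
  have hmass : (∑ ω : Fin n, if i = ω then (0 : ℝ) else (n : ℝ)⁻¹) = ((n : ℝ) - 1) / n := by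
    simp [Finset.sum_ite, Finset.filter_ne, Finset.card_univ, Nat.cast_sub i.pos, div_eq_mul_inv]
  simp [entOf, H2_bool, hmass]

end Uniform

section ReplaceRandom

variable {β : Type*} [Fintype β] [DecidableEq β] {n : ℕ} {x : Fin n → β} {F : β}

lemma entOf_uniform_replace (hF : ∀ i, x i ≠ F) :
    entOf (fun _ : Fin n => (n : ℝ)⁻¹) (fun k => ((fun i => if i = k then F else x i), ()))
      = Real.logb 2 n := by
  refine entOf_uniform_of_injective fun k l hkl => ?_
  by_contra hne
  have hk := congrFun (congrArg Prod.fst hkl) k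
  simp only [hne, if_false, if_true] at hk
  exact hF k hk.symm

lemma entOf_uniform_replace_coord {i : Fin n} (hF : x i ≠ F) :
    entOf (fun _ : Fin n => (n : ℝ)⁻¹) (fun k => ((if i = k then F else x i), ()))
      = -((n : ℝ)⁻¹ * Real.logb 2 (n : ℝ)⁻¹
          + ((n : ℝ) - 1) / n * Real.logb 2 (((n : ℝ) - 1) / n)) := by
  have hencode : Function.Injective fun b : Bool => ((if b then F else x i), ()) := by
    intro a b h
    cases a <;> cases b <;> simp_all [eq_comm]
  have hcomp : (fun k => ((if i = k then F else x i), ()))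
      = (fun b : Bool => ((if b then F else x i), ())) ∘ (fun k : Fin n => decide (i = k)) := by
    funext k
    by_cases h : i = k <;> simp [h]
  rw [hcomp, entOf_comp_of_injective_s5 _ _ hencode, entOf_uniform_decide_eq]

end ReplaceRandom

theorem stmt_5_general {β : Type*} [Fintype β] [DecidableEq β] (n : ℕ) (hn : 0 < n)
    (x : Fin n → β) (F : β) (hF : ∀ i, x i ≠ F) :
    Cof (fun _ : Fin n => (n : ℝ)⁻¹)
        (fun i k => if i = k then F else x i)
        (fun _ => (() : Unit))
      = ((n : ℝ) - 1) * (Real.logb 2 n - Real.logb 2 ((n : ℝ) - 1)) := by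
  have hn0 : (n : ℝ) ≠ 0 := by positivity
  have hconst := entOf_const_s5 (fun _ : Fin n => (n : ℝ)⁻¹) (by simp [hn0]) ()
  have hlog : ((n : ℝ) - 1) * Real.logb 2 (((n : ℝ) - 1) / n)
      = ((n : ℝ) - 1) * (Real.logb 2 ((n : ℝ) - 1) - Real.logb 2 n) := by
    rcases eq_or_ne ((n : ℝ) - 1) 0 with h | h
    · simp [h]
    · rw [Real.logb_div h hn0]
  simp only [Cof, entOf_uniform_replace hF, entOf_uniform_replace_coord (hF _), hconst,
    Finset.sum_const, Finset.card_univ, Fintype.card_fin, nsmul_eq_mul, Real.logb_inv]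
  field_simp
  linear_combination -hlog

/-- For the Replace Random task on lists of length `n` (input `x` a list of
`n` distinct symbols, output equal to `x` except that a uniformly random position is replaced
by the fixed fresh symbol `F`), the conditional total correlation is
`C(Y|X) = (n-1)·(log₂ n - log₂ (n-1))`. The randomness is the uniformly chosen index
`k : Fin n`, and output coordinate `i` is `F` if `i = k` and `x i` otherwise. -/
theorem stmt_5 {β : Type*} [Fintype β] [DecidableEq β] (n : ℕ) (hn : 0 < n)
    (x : Fin n → β) (hx : Function.Injective x) (F : β) (hF : ∀ i, x i ≠ F) :
    Cof (fun _ : Fin n => (n : ℝ)⁻¹)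
        (fun i k => if i = k then F else x i)
        (fun _ => (() : Unit))
      = ((n : ℝ) - 1) * (Real.logb 2 n - Real.logb 2 ((n : ℝ) - 1)) :=
  stmt_5_general n hn x F hF
end

section
/- For the Shuffle task decoded in T parallel steps with block sizes |S_1|,...,|S_T| summing to n, the lower bound on KL error is L_T = Σ_{t=1}^T |S_t|·log₂(k_t) - log₂(n!), where k_t = n - Σ_{j<t}|S_j| is the number of remaining items before step t. -/
open Finset Filter

lemma card_fix (n : ℕ) (A : Finset (Fin n)) :
    Fintype.card {f : Equiv.Perm (Fin n) // ∀ a ∈ A, f a = a} = (n - A.card).factorial := by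
  have e : Equiv.Perm {a : Fin n // a ∉ A} ≃ {f : Equiv.Perm (Fin n) // ∀ a, ¬ (a ∉ A) → f a = a} :=
    Equiv.Perm.subtypeEquivSubtypePerm (fun a => a ∉ A)
  have e2 : {f : Equiv.Perm (Fin n) // ∀ a, ¬ (a ∉ A) → f a = a} ≃ {f : Equiv.Perm (Fin n) // ∀ a ∈ A, f a = a} :=
    Equiv.subtypeEquivRight (fun f => by simp [not_not])
  rw [← Fintype.card_congr (e.trans e2), Fintype.card_perm, Fintype.card_subtype_compl,
    Fintype.card_fin, Fintype.card_coe]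

lemma card_agree (n : ℕ) (A : Finset (Fin n)) (σ₀ : Equiv.Perm (Fin n)) :
    (univ.filter fun σ : Equiv.Perm (Fin n) => ∀ i ∈ A, σ i = σ₀ i).card
      = (n - A.card).factorial := by
  rw [← card_fix n A, Fintype.card_subtype]
  apply Finset.card_bij (fun σ _ => σ₀⁻¹ * σ)
  · intro π hπ
    simp only [mem_filter, mem_univ, true_and] at hπ ⊢
    intro i hi
    simp [hπ i hi]
  · intro a ha b hb hab
    exact mul_left_cancel hab
  · intro σ hσ
    simp only [mem_filter, mem_univ, true_and] at hσ
    refine ⟨σ₀ * σ, ?_, by group⟩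
    simp only [mem_filter, mem_univ, true_and]
    intro i hi
    simp [hσ i hi]

lemma H2_two_valued {γ : Type*} [Fintype γ] (q : γ → ℝ) (c : ℝ) (hc : 0 < c)
    (hq : ∀ g, q g = 0 ∨ q g = c) (hsum : ∑ g, q g = 1) :
    H2 q = - Real.logb 2 c := by
  classical
  have hsplit : ∀ (F : ℝ → ℝ), F 0 = 0 → ∑ g, F (q g) = (univ.filter fun g => q g = c).card * F c := by
    intro F hF0
    rw [← Finset.sum_filter_add_sum_filter_not univ (fun g => q g = c)]
    have h1 : ∑ g ∈ univ.filter (fun g => q g = c), F (q g) = (univ.filter fun g => q g = c).card * F c := by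
      rw [Finset.sum_congr rfl (fun g hg => by rw [(Finset.mem_filter.mp hg).2]),
        Finset.sum_const, nsmul_eq_mul]
    have h2 : ∑ g ∈ univ.filter (fun g => ¬ q g = c), F (q g) = 0 := by
      apply Finset.sum_eq_zero
      intro g hg
      rcases hq g with h | h
      · rw [h, hF0]
      · exact absurd h (Finset.mem_filter.mp hg).2
    rw [h1, h2, add_zero]
  have hcard : ((univ.filter fun g => q g = c).card : ℝ) * c = 1 := by
    have := hsplit id rfl
    simpa [hsum] using this.symm
  have : H2 q = -(((univ.filter fun g => q g = c).card : ℝ) * (c * Real.logb 2 c)) := by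
    unfold H2
    rw [hsplit (fun x => x * Real.logb 2 x) (by simp)]
  rw [this, ← mul_assoc, hcard, one_mul]

lemma entOf_uniform_perm {γ : Type*} [Fintype γ] [DecidableEq γ] (n : ℕ) (A : Finset (Fin n))
    (f : Equiv.Perm (Fin n) → γ)
    (hf : ∀ σ τ, f σ = f τ ↔ ∀ i ∈ A, σ i = τ i) :
    entOf (fun _ : Equiv.Perm (Fin n) => ((n.factorial : ℝ))⁻¹) f
      = Real.logb 2 n.factorial - Real.logb 2 (n - A.card).factorial := by
  classical
  have hnf : (0 : ℝ) < n.factorial := by exact_mod_cast n.factorial_pos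
  have hmf : (0 : ℝ) < (n - A.card).factorial := by exact_mod_cast (n - A.card).factorial_pos
  set c : ℝ := ((n - A.card).factorial : ℝ) / n.factorial with hc
  have hcpos : 0 < c := div_pos hmf hnf
  set q : γ → ℝ := fun g => ∑ σ : Equiv.Perm (Fin n), if f σ = g then ((n.factorial : ℝ))⁻¹ else 0 with hqdef
  have hq : ∀ g, q g = 0 ∨ q g = c := by
    intro g
    have hcount : q g = ((univ.filter fun σ : Equiv.Perm (Fin n) => f σ = g).card : ℝ) * (n.factorial : ℝ)⁻¹ := by
      rw [hqdef]
      simp only []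
      rw [← Finset.sum_filter, Finset.sum_const, nsmul_eq_mul]
    by_cases hex : ∃ σ₀, f σ₀ = g
    · obtain ⟨σ₀, hσ₀⟩ := hex
      right
      have : (univ.filter fun σ : Equiv.Perm (Fin n) => f σ = g)
          = (univ.filter fun σ : Equiv.Perm (Fin n) => ∀ i ∈ A, σ i = σ₀ i) := by
        apply Finset.filter_congr
        intro σ _
        rw [← hσ₀]
        simp [hf σ σ₀]
      rw [hcount, this, card_agree, hc, div_eq_mul_inv]
    · left
      rw [hcount]
      have : (univ.filter fun σ : Equiv.Perm (Fin n) => f σ = g) = ∅ := by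
        apply Finset.filter_eq_empty_iff.mpr
        intro σ _
        exact fun h => hex ⟨σ, h⟩
      rw [this]
      simp
  have hsum : ∑ g, q g = 1 := by
    rw [hqdef, Finset.sum_comm]
    have : ∀ σ : Equiv.Perm (Fin n), (∑ g : γ, if f σ = g then ((n.factorial : ℝ))⁻¹ else 0) = (n.factorial : ℝ)⁻¹ := by
      intro σ
      rw [Finset.sum_ite_eq (univ) (f σ) (fun _ => ((n.factorial : ℝ))⁻¹)]
      simp
    rw [Finset.sum_congr rfl (fun σ _ => this σ), Finset.sum_const, nsmul_eq_mul,
      Finset.card_univ, Fintype.card_perm, Fintype.card_fin]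
    field_simp
  have := H2_two_valued q c hcpos hq hsum
  rw [entOf, show (fun g => ∑ ω, if f ω = g then ((n.factorial:ℝ))⁻¹ else 0) = q from rfl, this,
    hc, Real.logb_div (ne_of_gt hmf) (ne_of_gt hnf)]
  ring

/-- For the Shuffle task (uniformly random permutation of `n` distinct items
`x`) decoded in `T` parallel steps with blocks `S_t = blk⁻¹(t)` (sizes summing to `n`),
the lower bound on KL error is
`L_T = ∑ t |S_t|·log₂ k_t - log₂ (n!)`, where `k_t` is the number of positions in blocks
`≥ t`, i.e. the number of remaining items before step `t`. The left side is
`∑ t E[C(S_t | X, S_{<t})]`, conditioning at step `t` on the already placed items. -/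
theorem stmt_9 {β : Type*} [Fintype β] [DecidableEq β] (n T : ℕ)
    (x : Fin n → β) (hx : Function.Injective x)
    (blk : Fin n → Fin T) (hblk : Function.Surjective blk) :
    (∑ t : Fin T, Cof (fun _ : Equiv.Perm (Fin n) => ((n.factorial : ℝ))⁻¹)
        (fun j : {j // blk j = t} => fun σ => x (σ j.1))
        (fun σ => fun j : {j // blk j < t} => x (σ j.1)))
      = (∑ t : Fin T, ((univ.filter fun j => blk j = t).card : ℝ)
            * Real.logb 2 ((univ.filter fun j => t ≤ blk j).card))
        - Real.logb 2 (n.factorial) := by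
  classical
  set p : Equiv.Perm (Fin n) → ℝ := fun _ => ((n.factorial : ℝ))⁻¹ with hp
  -- block-counting function over ℕ
  set Bc : ℕ → ℕ := fun m => (univ.filter fun j => (blk j : ℕ) < m).card with hBc
  set G : ℕ → ℝ := fun m => Real.logb 2 (n - Bc m).factorial with hG
  have key : ∀ t : Fin T,
      Cof p (fun j : {j // blk j = t} => fun σ => x (σ j.1))
        (fun σ => fun j : {j // blk j < t} => x (σ j.1))
      = ((univ.filter fun j => blk j = t).card : ℝ)
          * Real.logb 2 ((univ.filter fun j => t ≤ blk j).card)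
        + (G (t + 1) - G t) := by
    intro t
    set B : Finset (Fin n) := univ.filter fun j => blk j < t with hB
    set S : Finset (Fin n) := univ.filter fun j => blk j = t with hS
    set C : Finset (Fin n) := univ.filter fun j => blk j ≤ t with hC
    have hmemB : ∀ i, i ∈ B ↔ blk i < t := by intro i; simp [hB]
    have hmemS : ∀ i, i ∈ S ↔ blk i = t := by intro i; simp [hS]
    have hmemC : ∀ i, i ∈ C ↔ blk i ≤ t := by intro i; simp [hC]
    -- entropy of the conditioning variable
    have entg : entOf p (fun σ => fun j : {j // blk j < t} => x (σ j.1))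
        = Real.logb 2 n.factorial - Real.logb 2 (n - B.card).factorial := by
      apply entOf_uniform_perm n B
      intro σ τ
      constructor
      · intro h i hi
        exact hx (congrFun h ⟨i, (hmemB i).mp hi⟩)
      · intro h
        funext j
        exact congrArg x (h j.1 ((hmemB j.1).mpr j.2))
    -- entropy of each single-coordinate joint
    have entj : ∀ j : {j // blk j = t},
        entOf p (fun σ => (x (σ j.1), fun i : {i // blk i < t} => x (σ i.1)))
        = Real.logb 2 n.factorial - Real.logb 2 (n - (B.card + 1)).factorial := by
      intro j
      have hjB : j.1 ∉ B := by
        rw [hmemB]; rw [j.2]; exact lt_irrefl t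
      have hcard : (insert j.1 B).card = B.card + 1 := Finset.card_insert_of_notMem hjB
      rw [← hcard]
      apply entOf_uniform_perm n (insert j.1 B)
      intro σ τ
      rw [Prod.ext_iff]
      constructor
      · intro ⟨h1, h2⟩ i hi
        rcases Finset.mem_insert.mp hi with h|h
        · subst h; exact hx h1
        · exact hx (congrFun h2 ⟨i, (hmemB i).mp h⟩)
      · intro h
        constructor
        · exact congrArg x (h j.1 (Finset.mem_insert_self _ _))
        · funext i
          exact congrArg x (h i.1 (Finset.mem_insert_of_mem ((hmemB i.1).mpr i.2)))
    -- entropy of the full joint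
    have entfull : entOf p (fun σ => ((fun j : {j // blk j = t} => x (σ j.1)),
          fun i : {i // blk i < t} => x (σ i.1)))
        = Real.logb 2 n.factorial - Real.logb 2 (n - C.card).factorial := by
      apply entOf_uniform_perm n C
      intro σ τ
      rw [Prod.ext_iff]
      constructor
      · intro ⟨h1, h2⟩ i hi
        rcases lt_or_eq_of_le ((hmemC i).mp hi) with h|h
        · exact hx (congrFun h2 ⟨i, h⟩)
        · exact hx (congrFun h1 ⟨i, h⟩)
      · intro h
        constructor
        · funext j
          exact congrArg x (h j.1 ((hmemC j.1).mpr (le_of_eq j.2)))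
        · funext i
          exact congrArg x (h i.1 ((hmemC i.1).mpr (le_of_lt i.2)))
    -- cardinalities
    have hCBS : C.card = B.card + S.card := by
      have hun : C = B ∪ S := by
        ext i
        simp only [hmemB, hmemS, hmemC, Finset.mem_union]
        exact le_iff_lt_or_eq
      rw [hun, Finset.card_union_of_disjoint]
      rw [Finset.disjoint_left]
      intro a ha ha'
      rw [hmemB] at ha; rw [hmemS] at ha'
      exact absurd ha' (ne_of_lt ha)
    have hBn : B.card + (univ.filter fun j => t ≤ blk j).card = n := by
      have := Finset.card_filter_add_card_filter_not (s := (univ : Finset (Fin n)))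
        (p := fun j => blk j < t)
      simp only [not_lt] at this
      rw [hB]
      rw [this]
      simp
    have hk : (univ.filter fun j => t ≤ blk j).card = n - B.card := by omega
    have hkpos : 1 ≤ n - B.card := by
      obtain ⟨j, hj⟩ := hblk t
      have : j ∈ univ.filter fun j => t ≤ blk j := by simp [hj]
      have := Finset.card_pos.mpr ⟨j, this⟩
      omega
    -- card of the subtype index
    have hSsub : (Fintype.card {j // blk j = t}) = S.card := by
      rw [Fintype.card_subtype]
    -- factorial split
    have hfac : Real.logb 2 ((n - B.card).factorial)
        = Real.logb 2 ((n - B.card : ℕ) : ℝ) + Real.logb 2 ((n - (B.card + 1)).factorial) := by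
      have h1 : n - B.card = (n - (B.card + 1)) + 1 := by omega
      rw [h1, Nat.factorial_succ]
      push_cast
      rw [Real.logb_mul (by positivity) (by positivity)]
    -- Bc values
    have hBcT : Bc (↑t + 1) = C.card := by
      have he : (univ.filter fun j => (blk j : ℕ) < ↑t + 1) = C := by
        ext j
        simp only [Finset.mem_filter, Finset.mem_univ, true_and, hmemC]
        rw [Nat.lt_succ_iff, Fin.le_def]
      simpa [hBc] using congrArg Finset.card he
    have hBct : Bc ↑t = B.card := by
      have he : (univ.filter fun j => (blk j : ℕ) < ↑t) = B := by
        ext j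
        simp only [Finset.mem_filter, Finset.mem_univ, true_and, hmemB]
        rw [Fin.lt_def]
      simpa [hBc] using congrArg Finset.card he
    -- put it together
    simp only [Cof, entg, entfull, entj, Finset.sum_const, Finset.card_univ, nsmul_eq_mul,
      hSsub, hG, hBcT, hBct, hCBS, hk]
    rw [hfac]
    push_cast
    ring
  rw [Finset.sum_congr rfl (fun t _ => key t), Finset.sum_add_distrib]
  have htel : (∑ t : Fin T, (G (↑t + 1) - G ↑t)) = - Real.logb 2 n.factorial := by
    rw [show (∑ t : Fin T, (G (↑t + 1) - G ↑t))
        = ∑ i ∈ Finset.range T, (G (i + 1) - G i) from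
      Fin.sum_univ_eq_sum_range (fun i => G (i + 1) - G i) T]
    rw [Finset.sum_range_sub]
    have hT : Bc T = n := by
      have he : (univ.filter fun j => (blk j : ℕ) < T) = univ := by
        apply Finset.filter_true_of_mem
        intro j _
        exact (blk j).isLt
      simpa [hBc] using congrArg Finset.card he
    have h0 : Bc 0 = 0 := by simp [hBc]
    rw [hG]
    simp only [hT, h0, Nat.sub_self, Nat.sub_zero, Nat.factorial_zero]
    simp
  rw [htel]
  ring
end

section
/- For the Shuffle task with k = 2 and n even, the success probability is (n-1)!!/n!!, and this tends to 0 as n → ∞. -/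
/-!
The steps are independent, so the success probability is the product, over the step sizes
`N = 2m, 2m - 2, …, 2`, of the chance `(N - 1) / N` that two uniform samples from `N` items
differ; this product telescopes to `r m = (2m-1)‼ / (2m)‼`. Since `r (m+1) = r m · (2m+1)/(2m+2)`
and `((2m+1)/(2m+2))² ≤ (2m+1)/(2m+3)`, induction gives `(r m)² ≤ 1 / (2m+1)`, hence `r m → 0`.
-/

open Filter Topology Nat

lemma card_subtype_forall_div_card_pi {ι : Type*} [Fintype ι] {α : ι → Type*}
    [∀ i, Finite (α i)] (p : ∀ i, α i → Prop) :
    (Nat.card {ω : ∀ i, α i // ∀ i, p i (ω i)} : ℝ) / Nat.card (∀ i, α i)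
      = ∏ i, (Nat.card {a // p i a} : ℝ) / Nat.card (α i) := by
  rw [Nat.card_congr Equiv.subtypePiEquivPi, Nat.card_pi, Nat.card_pi]
  push_cast
  exact (Finset.prod_div_distrib ..).symm

lemma card_injective_fin_two_div_card (N : ℕ) :
    (Nat.card {f : Fin 2 → Fin N // Function.Injective f} : ℝ) / Nat.card (Fin 2 → Fin N)
      = ((N : ℝ) - 1) / N := by
  rw [Nat.card_congr (Equiv.subtypeInjectiveEquivEmbedding _ _), Nat.card_eq_fintype_card,
    Fintype.card_embedding_eq, Nat.card_eq_fintype_card, Fintype.card_fun]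
  simp only [Fintype.card_fin, Nat.descFactorial_succ, Nat.descFactorial_zero, Nat.sub_zero]
  rcases N.eq_zero_or_pos with rfl | hN
  · simp
  · push_cast [Nat.cast_sub hN]
    field_simp

lemma doubleFactorial_ratio_succ (m : ℕ) :
    ((2 * (m + 1) - 1)‼ : ℝ) / (2 * (m + 1))‼
      = (2 * m + 1) / (2 * m + 2) * (((2 * m - 1)‼ : ℝ) / (2 * m)‼) := by
  rw [show 2 * (m + 1) - 1 = 2 * m + 1 by omega, show 2 * (m + 1) = 2 * m + 1 + 1 by omega,
    doubleFactorial_add_one, doubleFactorial_add_one, Nat.add_sub_cancel]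
  push_cast
  have : ((2 * m)‼ : ℝ) ≠ 0 := by exact_mod_cast (doubleFactorial_pos _).ne'
  field_simp
  ring

lemma prod_sub_one_div_eq_doubleFactorial_div (m : ℕ) :
    ∏ i : Fin m, (((2 * m - i * 2 : ℕ) : ℝ) - 1) / (2 * m - i * 2 : ℕ)
      = ((2 * m - 1)‼ : ℝ) / (2 * m)‼ := by
  induction m with
  | zero => simp
  | succ m ih =>
    rw [Fin.prod_univ_succ, doubleFactorial_ratio_succ, ← ih]
    congr 1
    · simp only [Fin.val_zero, zero_mul, Nat.sub_zero]
      push_cast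
      ring
    · refine Finset.prod_congr rfl fun i _ => ?_
      rw [show 2 * (m + 1) - (i.succ : ℕ) * 2 = 2 * m - i * 2 by simp only [Fin.val_succ]; omega]

lemma doubleFactorial_ratio_sq_le (m : ℕ) :
    (((2 * m - 1)‼ : ℝ) / (2 * m)‼) ^ 2 ≤ 1 / (2 * m + 1) := by
  induction m with
  | zero => simp
  | succ m ih =>
    have h_shrink : ((2 * m + 1 : ℝ) / (2 * m + 2)) ^ 2 * (1 / (2 * m + 1)) ≤ 1 / (2 * m + 3) := by
      have h_simp : ((2 * m + 1 : ℝ) / (2 * m + 2)) ^ 2 * (1 / (2 * m + 1))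
          = (2 * m + 1) / (2 * m + 2) ^ 2 := by
        field_simp
      rw [h_simp, div_le_div_iff₀ (by positivity) (by positivity)]
      nlinarith
    calc (((2 * (m + 1) - 1)‼ : ℝ) / (2 * (m + 1))‼) ^ 2
        = ((2 * m + 1 : ℝ) / (2 * m + 2)) ^ 2 * (((2 * m - 1)‼ : ℝ) / (2 * m)‼) ^ 2 := by
          rw [doubleFactorial_ratio_succ, mul_pow]
      _ ≤ ((2 * m + 1 : ℝ) / (2 * m + 2)) ^ 2 * (1 / (2 * m + 1)) := by gcongr
      _ ≤ 1 / (2 * m + 3) := h_shrink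
      _ = 1 / (2 * (m + 1 : ℕ) + 1) := by push_cast; ring

lemma tendsto_doubleFactorial_ratio :
    Tendsto (fun m : ℕ => ((2 * m - 1)‼ : ℝ) / (2 * m)‼) atTop (𝓝 0) := by
  have h_lin : Tendsto (fun m : ℕ => 2 * (m : ℝ) + 1) atTop atTop :=
    tendsto_atTop_add_const_right _ _
      ((tendsto_natCast_atTop_atTop (R := ℝ)).const_mul_atTop two_pos)
  have h_bound : Tendsto (fun m : ℕ => √(1 / (2 * (m : ℝ) + 1))) atTop (𝓝 0) := by
    simpa using (h_lin.inv_tendsto_atTop).sqrt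
  refine squeeze_zero (fun m => by positivity) (fun m => ?_) h_bound
  exact Real.le_sqrt_of_sq_le (doubleFactorial_ratio_sq_le m)

/-- For the Shuffle task with `k = 2` and `n = 2m` even: the `n/2` steps
each fill `2` positions independently and uniformly from the `n - 2i` remaining items
(step `i` 0-indexed, modelled as a uniformly random element of `Fin 2 → Fin (n - 2i)`),
and success means the two samples are distinct at every step. The success probability is
`(n-1)‼ / n‼`, and this tends to `0` as `n → ∞`. -/
theorem stmt_13 :
    (∀ m : ℕ, 0 < m →
      ((Nat.card {ω : ∀ i : Fin (2 * m / 2), Fin 2 → Fin (2 * m - (i : ℕ) * 2) //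
          ∀ i, Function.Injective (ω i)} : ℝ)
        / (Nat.card (∀ i : Fin (2 * m / 2), Fin 2 → Fin (2 * m - (i : ℕ) * 2)) : ℝ))
        = (Nat.doubleFactorial (2 * m - 1) : ℝ) / (Nat.doubleFactorial (2 * m) : ℝ))
    ∧ Filter.Tendsto
        (fun m : ℕ => (Nat.doubleFactorial (2 * m - 1) : ℝ) / (Nat.doubleFactorial (2 * m) : ℝ))
        Filter.atTop (nhds 0) := by
  refine ⟨fun m _ => ?_, tendsto_doubleFactorial_ratio⟩
  rw [show 2 * m / 2 = m by omega, card_subtype_forall_div_card_pi]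
  simp only [card_injective_fin_two_div_card]
  exact prod_sub_one_div_eq_doubleFactorial_div m
end

section
/- For the Replace Random task under greedy Top-k decoding with k dividing n, k > 2, and an ideal model: at each step every unmasked position's most likely token is its original item (keep probability (m-1)/m > 1/m for m = remaining masked count ≥ k > 2), so all positions keep their original tokens and no replacement ever occurs; hence the success probability is 0. -/
open Finset

/-- Replace Random under greedy Top-k decoding with `k ∣ n`, `k > 2`, and
an ideal model: positions are unmasked in `T = n/k` steps of `k` positions each (block
assignment `blk`); when position `j` is decoded, `m_j = n - blk(j)·k` positions remain
masked, and greedy decoding keeps the original token `x j` exactly when the keep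
probability `(m_j - 1)/m_j` exceeds the replace probability `1/m_j` (which always holds
since `m_j ≥ k > 2`), otherwise outputs `F`. Hence no replacement ever occurs, and the
success probability is `0`: no greedy output matches the target pattern (input with exactly
one position replaced by `F`). -/
theorem stmt_15 {β : Type*} [DecidableEq β] (n k T : ℕ) (hk : 2 < k) (hdvd : k ∣ n)
    (hT : T = n / k)
    (x : Fin n → β) (F : β) (hF : ∀ j, x j ≠ F)
    (blk : Fin n → Fin T) (hsize : ∀ t, (univ.filter fun j => blk j = t).card = k)
    (out : Fin n → β)
    (hout : ∀ j, out j =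
      if (1 : ℝ) / ((n - (blk j : ℕ) * k : ℕ) : ℝ)
          < (((n - (blk j : ℕ) * k : ℕ) : ℝ) - 1) / ((n - (blk j : ℕ) * k : ℕ) : ℝ)
      then x j else F) :
    ¬ ∃ i : Fin n, ∀ j, out j = if j = i then F else x j := by
  rintro ⟨i, hi⟩
  have hTk : T * k = n := by
    rw [hT, Nat.div_mul_cancel hdvd]
  have hle : ((blk i : ℕ) + 1) * k ≤ n := by
    have : (blk i : ℕ) + 1 ≤ T := (blk i).2
    calc ((blk i : ℕ) + 1) * k ≤ T * k := Nat.mul_le_mul_right k this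
      _ = n := hTk
  have hle' : (blk i : ℕ) * k + k ≤ n := by rw [add_mul, one_mul] at hle; exact hle
  have hm : k ≤ n - (blk i : ℕ) * k := by omega
  set m : ℕ := n - (blk i : ℕ) * k with hmdef
  have hm3 : 3 ≤ m := by omega
  have hmR : (3 : ℝ) ≤ (m : ℝ) := by exact_mod_cast hm3
  have hmpos : (0 : ℝ) < (m : ℝ) := by linarith
  have hlt : (1 : ℝ) / (m : ℝ) < ((m : ℝ) - 1) / (m : ℝ) := by
    rw [div_lt_div_iff₀ hmpos hmpos]; nlinarith
  have h1 := hout i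
  rw [if_pos hlt] at h1
  have h2 := hi i
  rw [if_pos rfl] at h2
  exact hF i (h1.symm.trans h2)
end

section
/- For the Replace Random task with one-step generation (k = n) under temperature sampling from the true marginals, the success probability is Acc(n) = ((n-1)/n)^{n-1}, and lim_{n→∞} Acc(n) = 1/e. -/
/-!
The outcomes with exactly one replacement are the `n` indicators of single positions, and each
has probability `(1/n) * ((n-1)/n)^(n-1)`, so their total is `((n-1)/n)^(n-1)`. Writing
`n = m + 1`, this is `((1 + 1/m)^m)⁻¹`, which tends to `e⁻¹`.
-/

open Finset Classical

theorem filter_existsUnique_eq_true_eq_image {ι : Type*} [Fintype ι] [DecidableEq ι]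
    [DecidablePred fun ω : ι → Bool => ∃! i, ω i = true] :
    univ.filter (fun ω : ι → Bool => ∃! i, ω i = true)
      = univ.image (fun i j => decide (j = i)) := by
  ext ω
  simp only [mem_filter, mem_univ, true_and, mem_image]
  constructor
  · rintro ⟨i, hi, hunique⟩
    refine ⟨i, funext fun j => ?_⟩
    by_cases hj : j = i
    · simp [hj, hi]
    · simpa [hj] using mt (hunique j) hj
  · rintro ⟨i, rfl⟩
    exact ⟨i, by simp, fun j => by simp⟩

theorem prod_ite_decide_eq {ι R : Type*} [Fintype ι] [DecidableEq ι] [CommMonoid R]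
    (i : ι) (p q : R) :
    ∏ j, (if decide (j = i) then p else q) = p * q ^ (Fintype.card ι - 1) := by
  rw [← mul_prod_erase univ _ (mem_univ i), if_pos (by simp),
    prod_congr rfl fun j hj => if_neg (by simpa using (mem_erase.mp hj).1),
    prod_const, card_erase_of_mem (mem_univ i), card_univ]

theorem sum_existsUnique_prod_ite_bool {ι R : Type*} [Fintype ι] [DecidableEq ι]
    [DecidablePred fun ω : ι → Bool => ∃! i, ω i = true] [CommSemiring R] (p q : R) :
    (∑ ω : ι → Bool, if (∃! i, ω i = true) then ∏ i, (if ω i then p else q) else 0)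
      = Fintype.card ι * (p * q ^ (Fintype.card ι - 1)) := by
  rw [← sum_filter, filter_existsUnique_eq_true_eq_image,
    sum_image fun a _ b _ h => by simpa using congrFun h a]
  simp only [prod_ite_decide_eq, sum_const, card_univ, nsmul_eq_mul]

theorem tendsto_sub_one_div_pow_sub_one :
    Filter.Tendsto (fun n : ℕ => (((n : ℝ) - 1) / n) ^ (n - 1))
      Filter.atTop (nhds (Real.exp 1)⁻¹) := by
  rw [← Filter.tendsto_add_atTop_iff_nat 1]
  refine ((Real.tendsto_one_add_div_pow_exp 1).inv₀ (Real.exp_ne_zero 1)).congr fun m => ?_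
  rcases Nat.eq_zero_or_pos m with rfl | hm
  · norm_num
  · -- `m / (m + 1) = (1 + 1 / m)⁻¹`
    have hm' : (m : ℝ) ≠ 0 := by positivity
    rw [Nat.add_sub_cancel, ← inv_pow]
    push_cast
    congr 1
    field_simp
    ring

/-- For the Replace Random task with one-step generation (`k = n`) under
temperature sampling from the true marginals, each of the `n` positions independently
replaces its item with `F` with probability `1/n` (indicator `ω i = true`) and keeps it with
probability `(n-1)/n`. Success requires exactly one replacement; its probability is
`Acc(n) = ((n-1)/n)^(n-1)`, and `Acc(n) → 1/e` as `n → ∞`. -/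
theorem stmt_17 (n : ℕ) (hn : 0 < n) :
    (∑ ω : Fin n → Bool,
        if (∃! i : Fin n, ω i = true)
        then ∏ i, (if ω i then (1 : ℝ) / n else ((n : ℝ) - 1) / n) else 0)
      = (((n : ℝ) - 1) / n) ^ (n - 1)
    ∧ Filter.Tendsto (fun n : ℕ => (((n : ℝ) - 1) / n) ^ (n - 1))
        Filter.atTop (nhds (Real.exp 1)⁻¹) := by
  refine ⟨?_, tendsto_sub_one_div_pow_sub_one⟩
  have hn' : (n : ℝ) ≠ 0 := by positivity
  rw [sum_existsUnique_prod_ite_bool, Fintype.card_fin, ← mul_assoc, mul_one_div_cancel hn',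
    one_mul]
end
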